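/- arXiv:1310.4731 — 4 statements merged into one kernel-verified Lean document; each statement's English description precedes it below -/
import Mathlib

section
/- Under assumptions (A1)–(A6), set c₀ = inf_N J, where N is the Nehari–Pankov manifold of J. Then c₀ ≥ a > 0 and J has a (PS)_{c₀}-sequence in N, i.e. there exists a sequence (uₙ) ⊂ N with J(uₙ) → c₀ and ‖J'(uₙ)‖_{X*} → 0. -/
/-!
Every `u` in the Nehari–Pankov set `𝒩` maximizes `J` on `X̂(u)`, which meets the sphere of
radius `r` in `X⁺`; hence `J ≥ a` on `𝒩`, and `𝒩` is the image of `m̂`. Weak sequential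
compactness of bounded sets (reflexivity), the lower semicontinuity (A2), the strong convergence
(A3) and the uniqueness of the maximizer make `m̂` continuous on `X ∖ X̃`. Ekeland's principle for
the continuous functional `J ∘ m̂` on the annulus `{w ∈ X⁺ : 1 ≤ ‖w‖ ≤ 3}` gives points `x` with
`J (m̂ x)` almost minimal and almost stationary along every segment `x + t z`, `z ∈ X⁺`. Since
`m̂ (x + t z) - t s z ∈ X̂(x)` for the coefficient `s → ‖P (m̂ x)‖ / ‖x‖ ≥ δ / 3`, comparing with
the maximum of `J` on `X̂(x)` bounds `J' (m̂ x)` from below on `X⁺`; it vanishes on `X̃`.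
-/

open Filter Topology Set NormedSpace TopologicalSpace Asymptotics

section Ekeland

variable {α : Type*} [MetricSpace α]

def ekelandSet (f : α → ℝ) (ε : ℝ) (x : α) : Set α := {y | f y + ε * dist y x ≤ f x}

variable {f : α → ℝ} {ε : ℝ}

theorem self_mem_ekelandSet (x : α) : x ∈ ekelandSet f ε x := by simp [ekelandSet]

theorem le_of_mem_ekelandSet (hε : 0 ≤ ε) {x y : α} (hy : y ∈ ekelandSet f ε x) : f y ≤ f x := by
  have : f y + ε * dist y x ≤ f x := hy
  nlinarith [dist_nonneg (x := y) (y := x)]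

theorem ekelandSet_trans (hε : 0 ≤ ε) {x y z : α} (hy : y ∈ ekelandSet f ε x)
    (hz : z ∈ ekelandSet f ε y) : z ∈ ekelandSet f ε x := by
  have hy : f y + ε * dist y x ≤ f x := hy
  have hz : f z + ε * dist z y ≤ f y := hz
  show f z + ε * dist z x ≤ f x
  nlinarith [dist_triangle z y x]

theorem LowerSemicontinuous.isClosed_ekelandSet (hf : LowerSemicontinuous f) (x : α) :
    IsClosed (ekelandSet f ε x) :=
  (hf.add (continuous_const.mul (continuous_id.dist continuous_const)).lowerSemicontinuous)
    |>.isClosed_preimage (f x)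

theorem exists_ekeland_seq (hbdd : BddBelow (range f)) (hε : 0 ≤ ε) (x₀ : α) :
    ∃ u : ℕ → α, u 0 = x₀ ∧ (∀ m n, m ≤ n → u n ∈ ekelandSet f ε (u m)) ∧
      ∀ n, ∀ y ∈ ekelandSet f ε (u n), f (u (n + 1)) ≤ f y + (1 / 2) ^ n := by
  have hnext : ∀ (n : ℕ) x, ∃ y ∈ ekelandSet f ε x,
      f y ≤ sInf (f '' ekelandSet f ε x) + (1 / 2) ^ n := fun n x => by
    obtain ⟨_, ⟨y, hy, rfl⟩, hlt⟩ := exists_lt_of_csInf_lt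
      (⟨f x, x, self_mem_ekelandSet x, rfl⟩ : (f '' ekelandSet f ε x).Nonempty)
      (lt_add_of_pos_right _ (by positivity : (0 : ℝ) < (1 / 2) ^ n))
    exact ⟨y, hy, hlt.le⟩
  choose next hnext hnextf using hnext
  refine ⟨fun n => Nat.rec x₀ next n, rfl, fun m n hmn => ?_, fun n y hy => ?_⟩
  · induction n, hmn using Nat.le_induction with
    | base => exact self_mem_ekelandSet _
    | succ n _ ih => exact ekelandSet_trans hε ih (hnext n _)
  · refine (hnextf n _).trans (add_le_add_left ?_ _)
    exact csInf_le (hbdd.mono (image_subset_range _ _)) ⟨y, hy, rfl⟩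

theorem LowerSemicontinuous.exists_ekeland [CompleteSpace α] (hf : LowerSemicontinuous f)
    (hbdd : BddBelow (range f)) (hε : 0 < ε) (x₀ : α) :
    ∃ x, f x + ε * dist x x₀ ≤ f x₀ ∧ ∀ y, f x ≤ f y + ε * dist x y := by
  obtain ⟨u, rfl, hmono, hnext⟩ := exists_ekeland_seq hbdd hε.le x₀
  have hbddu : BddBelow (range (f ∘ u)) := hbdd.mono (range_comp_subset_range u f)
  have hanti : Antitone (f ∘ u) := antitone_nat_of_succ_le fun n =>
    le_of_mem_ekelandSet (f := f) hε.le (hmono n (n + 1) n.le_succ)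
  have hcauchy : CauchySeq u := by
    refine Metric.cauchySeq_iff'.2 fun η hη => ?_
    obtain ⟨N, hN⟩ := ((tendsto_order.1 (tendsto_atTop_ciInf hanti hbddu)).2 _
      (lt_add_of_pos_right (⨅ n, f (u n)) (mul_pos hε hη))).exists
    refine ⟨N, fun n hn => ?_⟩
    have hS : f (u n) + ε * dist (u n) (u N) ≤ f (u N) := hmono N n hn
    have hinf : ⨅ k, f (u k) ≤ f (u n) := ciInf_le hbddu n
    simp only [Function.comp_apply] at hN
    nlinarith
  obtain ⟨x, hx⟩ := cauchySeq_tendsto_of_complete hcauchy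
  have hxS : ∀ m, x ∈ ekelandSet f ε (u m) := fun m =>
    (hf.isClosed_ekelandSet _).mem_of_tendsto hx (eventually_atTop.2 ⟨m, hmono m⟩)
  refine ⟨x, hxS 0, fun y => le_of_not_gt fun hy => ?_⟩
  have hyS : y ∈ ekelandSet f ε x := by
    show f y + ε * dist y x ≤ f x
    rw [dist_comm]; exact hy.le
  have hxy : ∀ n : ℕ, f x ≤ f y + (1 / 2) ^ n := fun n =>
    (le_of_mem_ekelandSet hε.le (hxS (n + 1))).trans
      (hnext n y (ekelandSet_trans hε.le (hxS n) hyS))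
  have hpow : Tendsto (fun n : ℕ => f y + (1 / 2 : ℝ) ^ n) atTop (𝓝 (f y)) := by
    simpa using tendsto_const_nhds.add
      (tendsto_pow_atTop_nhds_zero_of_lt_one (by norm_num : (0 : ℝ) ≤ 1 / 2) (by norm_num))
  nlinarith [ge_of_tendsto' hpow hxy, dist_nonneg (x := x) (y := y)]

end Ekeland

theorem HasStrictFDerivAt.tendsto_sub_sub_smul_div {E : Type*} [NormedAddCommGroup E]
    [NormedSpace ℝ E] {f : E → ℝ} {f' : E →L[ℝ] ℝ} {u : E} (hf : HasStrictFDerivAt f f' u)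
    {a w : ℝ → E} {w₀ : E}
    (ha : Tendsto a (𝓝[≠] 0) (𝓝 u)) (hw : Tendsto w (𝓝[≠] 0) (𝓝 w₀)) :
    Tendsto (fun t => (f (a t) - f (a t - t • w t)) / t) (𝓝[≠] 0) (𝓝 (f' w₀)) := by
  have hstep : Tendsto (fun t => t • w t) (𝓝[≠] 0) (𝓝 0) := by
    simpa using (tendsto_nhdsWithin_of_tendsto_nhds tendsto_id).smul hw
  have hpair : Tendsto (fun t => (a t, a t - t • w t)) (𝓝[≠] 0) (𝓝 (u, u)) :=
    ha.prodMk_nhds (by simpa using ha.sub hstep)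
  have hrem : (fun t => f (a t) - f (a t - t • w t) - t * f' (w t)) =o[𝓝[≠] 0] fun t => t := by
    have hO : (fun t => t • w t) =O[𝓝[≠] 0] fun t => t := by
      simpa using (isBigO_refl (fun t : ℝ => t) _).smul (hw.isBigO_one ℝ)
    refine ((hf.isLittleO.comp_tendsto hpair).trans_isBigO
      (hO.congr_left fun t => ?_)).congr_left fun t => ?_ <;> simp
  have hlim := hrem.tendsto_div_nhds_zero.add ((f'.continuous.tendsto w₀).comp hw)
  rw [zero_add] at hlim
  refine hlim.congr' ?_
  filter_upwards [self_mem_nhdsWithin] with t (ht : t ≠ 0)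
  simp only [Function.comp_apply]
  field_simp
  ring

theorem exists_seq_tendsto_of_forall_pos {α : Type*} {s : Set α} {f g : α → ℝ} {c K : ℝ}
    (hf : ∀ u ∈ s, c ≤ f u) (hg : ∀ u, 0 ≤ g u)
    (h : ∀ ε > 0, ∃ u ∈ s, f u ≤ c + ε ∧ g u ≤ K * ε) :
    ∃ u : ℕ → α, (∀ n, u n ∈ s) ∧ Tendsto (fun n => f (u n)) atTop (𝓝 c) ∧
      Tendsto (fun n => g (u n)) atTop (𝓝 0) := by
  choose u hu hfu hgu using fun n : ℕ => h (1 / (n + 1)) Nat.one_div_pos_of_nat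
  have hε : Tendsto (fun n : ℕ => 1 / ((n : ℝ) + 1)) atTop (𝓝 0) :=
    tendsto_one_div_add_atTop_nhds_zero_nat
  refine ⟨u, hu, tendsto_of_tendsto_of_tendsto_of_le_of_le tendsto_const_nhds
    (by simpa using tendsto_const_nhds.add hε) (fun n => hf _ (hu n)) hfu,
    squeeze_zero (fun n => hg _) hgu (by simpa using hε.const_mul K)⟩

section Dual

variable {E : Type*} [NormedAddCommGroup E] [NormedSpace ℝ E]

theorem Submodule.exists_dual_map_eq_zero_ne_zero {W : Submodule ℝ E} (hW : IsClosed (W : Set E))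
    {x : E} (hx : x ∉ W) : ∃ f : StrongDual ℝ E, (∀ w ∈ W, f w = 0) ∧ f x ≠ 0 := by
  -- the normed structure on `E ⧸ W` takes closedness of `W` as an instance
  have : IsClosed (W : Set E) := hW
  obtain ⟨g, hg⟩ := SeparatingDual.exists_ne_zero (R := ℝ) (x := W.mkQ x) (by simpa using hx)
  refine ⟨g.comp W.mkQL, fun w hw => ?_, hg⟩
  simp [(Submodule.Quotient.mk_eq_zero W).2 hw]

theorem Submodule.mem_of_forall_dual_tendsto {W : Submodule ℝ E} (hW : IsClosed (W : Set E))
    {v : ℕ → E} (hv : ∀ n, v n ∈ W) {x : E}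
    (hvx : ∀ φ : StrongDual ℝ E, Tendsto (fun n => φ (v n)) atTop (𝓝 (φ x))) : x ∈ W := by
  by_contra hx
  obtain ⟨f, hfW, hfx⟩ := W.exists_dual_map_eq_zero_ne_zero hW hx
  exact hfx (tendsto_nhds_unique (hvx f) (by simp [hfW _ (hv _)]))

theorem separableSpace_of_separableSpace_dual [SeparableSpace (StrongDual ℝ E)] :
    SeparableSpace E := by
  set F := denseSeq (StrongDual ℝ E)
  have hnorming : ∀ n, ∃ x : E, ‖x‖ ≤ 1 ∧ ‖F n‖ / 2 ≤ |F n x| := by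
    intro n
    rcases (norm_nonneg (F n)).eq_or_lt with h | h
    · exact ⟨0, by simp, by simp [← h]⟩
    · obtain ⟨x, hx, hFx⟩ := (F n).exists_lt_apply_of_lt_opNorm (half_lt_self h)
      exact ⟨x, hx.le, hFx.le⟩
  choose x hx1 hx2 using hnorming
  set S := Submodule.span ℝ (range x)
  set Y := S.topologicalClosure
  have hY : Y = ⊤ := by
    refine Submodule.eq_top_iff'.2 fun z => by_contra fun hz => ?_
    obtain ⟨f, hfY, hfz⟩ := Y.exists_dual_map_eq_zero_ne_zero S.isClosed_topologicalClosure hz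
    have hf : 0 < ‖f‖ := norm_pos_iff.2 fun h => hfz (by simp [h])
    obtain ⟨n, hn⟩ := (denseRange_denseSeq (StrongDual ℝ E)).exists_dist_lt f
      (by positivity : 0 < ‖f‖ / 4)
    rw [dist_comm, dist_eq_norm] at hn
    have hxY : x n ∈ Y := S.le_topologicalClosure (Submodule.subset_span (mem_range_self n))
    have hsmall : |F n (x n)| ≤ ‖f‖ / 4 :=
      calc |F n (x n)| = ‖(F n - f) (x n)‖ := by simp [hfY _ hxY]
        _ ≤ ‖F n - f‖ * ‖x n‖ := (F n - f).le_opNorm _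
        _ ≤ ‖f‖ / 4 := by nlinarith [norm_nonneg (x n), norm_nonneg (F n - f), hx1 n]
    have := norm_sub_norm_le f (F n)
    have := hx2 n
    rw [norm_sub_rev] at hn
    linarith
  have hsep : IsSeparable (Y : Set E) :=
    S.topologicalClosure_coe ▸ (countable_range x).isSeparable.span.closure
  rw [hY, Submodule.top_coe] at hsep
  exact isSeparable_univ_iff.1 hsep

theorem Submodule.surjective_inclusionInDoubleDual
    (hrefl : Function.Surjective (inclusionInDoubleDual ℝ E)) {Y : Submodule ℝ E}
    (hY : IsClosed (Y : Set E)) : Function.Surjective (inclusionInDoubleDual ℝ Y) := by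
  intro G
  set R : StrongDual ℝ E →L[ℝ] StrongDual ℝ Y := (ContinuousLinearMap.compL ℝ Y E ℝ).flip Y.subtypeL
  obtain ⟨x, hx⟩ := hrefl (G.comp R)
  have hGx : ∀ φ : StrongDual ℝ E, φ x = G (φ.comp Y.subtypeL) := fun φ =>
    congrArg (fun T => T φ) hx
  have hxY : x ∈ Y := by
    by_contra hxY
    obtain ⟨f, hfY, hfx⟩ := Y.exists_dual_map_eq_zero_ne_zero hY hxY
    have : f.comp Y.subtypeL = 0 := by ext y; exact hfY y y.2
    exact hfx (by rw [hGx, this, map_zero])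
  refine ⟨⟨x, hxY⟩, ContinuousLinearMap.ext fun ψ => ?_⟩
  obtain ⟨φ, hφ, -⟩ := exists_extension_norm_eq Y ψ
  have : φ.comp Y.subtypeL = ψ := ContinuousLinearMap.ext hφ
  rw [dual_def, ← this, ← hGx]
  rfl

theorem exists_subseq_forall_dual_tendsto
    (hrefl : Function.Surjective (inclusionInDoubleDual ℝ E)) {v : ℕ → E} {M : ℝ}
    (hv : ∀ n, ‖v n‖ ≤ M) :
    ∃ σ : ℕ → ℕ, StrictMono σ ∧ ∃ x : E,
      ∀ φ : StrongDual ℝ E, Tendsto (fun n => φ (v (σ n))) atTop (𝓝 (φ x)) := by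
  -- `Y`, the closed span of `v`, is separable and reflexive, so `Y*` is separable and the
  -- sequential Banach–Alaoglu theorem applies in `Y** = Y`
  set S := Submodule.span ℝ (range v)
  set Y := S.topologicalClosure
  have hvY : ∀ n, v n ∈ Y := fun n => S.le_topologicalClosure (Submodule.subset_span ⟨n, rfl⟩)
  have : SeparableSpace Y :=
    (S.topologicalClosure_coe ▸ (countable_range v).isSeparable.span.closure).separableSpace
  have hYrefl := Submodule.surjective_inclusionInDoubleDual hrefl S.isClosed_topologicalClosure
  have : SeparableSpace (StrongDual ℝ (StrongDual ℝ Y)) :=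
    hYrefl.denseRange.separableSpace (inclusionInDoubleDual ℝ Y).continuous
  have : SeparableSpace (StrongDual ℝ Y) :=
    separableSpace_of_separableSpace_dual (E := StrongDual ℝ Y)
  set w : ℕ → WeakDual ℝ (StrongDual ℝ Y) := fun n =>
    StrongDual.toWeakDual (inclusionInDoubleDual ℝ Y ⟨v n, hvY n⟩)
  obtain ⟨Φ, -, σ, hσ, hΦ⟩ := WeakDual.isSeqCompact_closedBall ℝ (StrongDual ℝ Y) 0 M
    (x := w) fun n => by simpa [w] using (double_dual_bound ℝ Y _).trans (hv n)
  obtain ⟨y, rfl⟩ := hYrefl (WeakDual.toStrongDual Φ)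
  refine ⟨σ, hσ, y, fun φ => ?_⟩
  exact ((WeakDual.eval_continuous (φ.comp Y.subtypeL)).tendsto _).comp hΦ

end Dual

section NehariPankov

variable {X : Type*} [NormedAddCommGroup X] [NormedSpace ℝ X]

-- In the paper's notation: `lineSum Xt u = X(u)`, `raySum Xt u = X̂(u)`, `nehariPankov Xt J' = 𝒩`,
-- and `TTendsto P u v` is `uₙ →_T v`.
def lineSum (Xt : Submodule ℝ X) (u : X) : Set X := {z | ∃ t : ℝ, ∃ v ∈ Xt, z = t • u + v}

def raySum (Xt : Submodule ℝ X) (u : X) : Set X := {w | ∃ t : ℝ, 0 ≤ t ∧ ∃ v ∈ Xt, w = t • u + v}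

def nehariPankov (Xt : Submodule ℝ X) (J' : X → X →L[ℝ] ℝ) : Set X :=
  {u | u ∉ Xt ∧ J' u u = 0 ∧ ∀ v ∈ Xt, J' u v = 0}

def TTendsto (P : X →L[ℝ] X) (u : ℕ → X) (v : X) : Prop :=
  Tendsto (fun n => P (u n)) atTop (𝓝 (P v)) ∧
    ∀ φ : X →L[ℝ] ℝ, Tendsto (fun n => φ (u n - P (u n))) atTop (𝓝 (φ (v - P v)))

structure IsSplittingProj (Xp Xt : Submodule ℝ X) (P : X →L[ℝ] X) : Prop where
  apply_mem : ∀ x, P x ∈ Xp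
  apply_eq_self : ∀ x ∈ Xp, P x = x
  mem_iff_apply_eq_zero : ∀ x, x ∈ Xt ↔ P x = 0
  norm_apply_le : ∀ x, ‖P x‖ ≤ ‖x‖

structure IsNehariPankovMap (Xt : Submodule ℝ X) (J : X → ℝ) (J' : X → X →L[ℝ] ℝ)
    (m : X → X) : Prop where
  mem_raySum : ∀ u ∉ Xt, m u ∈ raySum Xt u
  deriv_eq_zero : ∀ u ∉ Xt, ∀ z ∈ lineSum Xt u, J' (m u) z = 0
  eq_of_deriv_eq_zero : ∀ u ∉ Xt, ∀ w ∈ raySum Xt u, w ≠ 0 →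
    (∀ z ∈ lineSum Xt u, J' w z = 0) → w = m u
  lt_of_ne : ∀ u ∉ Xt, ∀ w ∈ raySum Xt u, w ≠ m u → J w < J (m u)

namespace IsSplittingProj

variable {Xp Xt : Submodule ℝ X} {P : X →L[ℝ] X}

theorem notMem_iff_norm_apply_pos (hP : IsSplittingProj Xp Xt P) {x : X} :
    x ∉ Xt ↔ 0 < ‖P x‖ := by
  rw [hP.mem_iff_apply_eq_zero, norm_pos_iff]

theorem sub_apply_mem (hP : IsSplittingProj Xp Xt P) (x : X) : x - P x ∈ Xt := by
  rw [hP.mem_iff_apply_eq_zero, map_sub, hP.apply_eq_self _ (hP.apply_mem x), sub_self]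

theorem smul_apply_mem_raySum (hP : IsSplittingProj Xp Xt P) {c : ℝ} (hc : 0 ≤ c) (u : X) :
    c • P u ∈ raySum Xt u :=
  ⟨c, hc, -(c • (u - P u)), Xt.neg_mem (Xt.smul_mem c (hP.sub_apply_mem u)), by module⟩

theorem mem_raySum_smul_apply (hP : IsSplittingProj Xp Xt P) {c : ℝ} (hc : 0 < c) (u : X) :
    u ∈ raySum Xt (c • P u) :=
  ⟨c⁻¹, inv_nonneg.2 hc.le, u - P u, hP.sub_apply_mem u, by
    rw [smul_smul, inv_mul_cancel₀ hc.ne', one_smul]; abel⟩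

theorem smul_apply_notMem (hP : IsSplittingProj Xp Xt P) {c : ℝ} (hc : c ≠ 0) {u : X}
    (hu : u ∉ Xt) : c • P u ∉ Xt := by
  rw [hP.mem_iff_apply_eq_zero, map_smul, hP.apply_eq_self _ (hP.apply_mem u), smul_eq_zero,
    not_or, ← hP.mem_iff_apply_eq_zero]
  exact ⟨hc, hu⟩

theorem norm_apply_smul_add (hP : IsSplittingProj Xp Xt P) {s : ℝ} (hs : 0 ≤ s) (y : X) {v : X}
    (hv : v ∈ Xt) : ‖P (s • y + v)‖ = s * ‖P y‖ := by
  rw [map_add, map_smul, (hP.mem_iff_apply_eq_zero v).1 hv, add_zero, norm_smul, Real.norm_eq_abs,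
    abs_of_nonneg hs]

theorem norm_le_of_forall_neg_le (hP : IsSplittingProj Xp Xt P) {φ : X →L[ℝ] ℝ}
    (hφ : ∀ v ∈ Xt, φ v = 0) {C : ℝ} (hC : 0 ≤ C) (h : ∀ z ∈ Xp, -(C * ‖z‖) ≤ φ z) :
    ‖φ‖ ≤ C := by
  refine φ.opNorm_le_bound hC fun x => ?_
  have hx : φ x = φ (P x) := by
    rw [← sub_eq_zero, ← map_sub, hφ _ (hP.sub_apply_mem x)]
  have h₁ := h _ (hP.apply_mem x)
  have h₂ := h _ (Xp.neg_mem (hP.apply_mem x))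
  rw [map_neg, norm_neg] at h₂
  rw [Real.norm_eq_abs, hx, abs_le]
  constructor <;> nlinarith [hP.norm_apply_le x]

end IsSplittingProj

namespace IsNehariPankovMap

variable {Xt : Submodule ℝ X} {J : X → ℝ} {J' : X → X →L[ℝ] ℝ} {m : X → X}

theorem le_apply (hm : IsNehariPankovMap Xt J J' m) {u : X} (hu : u ∉ Xt) {w : X}
    (hw : w ∈ raySum Xt u) : J w ≤ J (m u) := by
  by_cases h : w = m u
  · rw [h]
  · exact (hm.lt_of_ne u hu w hw h).le

theorem mem_nehariPankov (hm : IsNehariPankovMap Xt J J' m) {u : X} (hu : u ∉ Xt)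
    (hmu : m u ∉ Xt) : m u ∈ nehariPankov Xt J' := by
  obtain ⟨t, -, v, hv, htv⟩ := hm.mem_raySum u hu
  exact ⟨hmu, hm.deriv_eq_zero u hu _ ⟨t, v, hv, htv⟩,
    fun w hw => hm.deriv_eq_zero u hu w ⟨0, w, hw, by simp⟩⟩

theorem apply_eq_of_mem_raySum (hm : IsNehariPankovMap Xt J J' m) {u w : X} (hu : u ∉ Xt)
    (hw : w ∈ nehariPankov Xt J') (hwu : w ∈ raySum Xt u) : m u = w := by
  refine (hm.eq_of_deriv_eq_zero u hu w hwu (fun h => hw.1 (h ▸ Xt.zero_mem)) ?_).symm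
  obtain ⟨hwXt, hww, hwv⟩ := hw
  obtain ⟨s, -, v', hv', rfl⟩ := hwu
  have hs : s ≠ 0 := by rintro rfl; simp_all
  rintro z ⟨t, v, hv, rfl⟩
  have hz : t • u + v = (t / s) • (s • u + v') + (v - (t / s) • v') := by
    rw [smul_add, smul_smul, div_mul_cancel₀ t hs]; abel
  rw [hz, map_add, map_smul, hww, hwv _ (Xt.sub_mem hv (Xt.smul_mem _ hv')), smul_zero, add_zero]

theorem apply_self (hm : IsNehariPankovMap Xt J J' m) {u : X} (hu : u ∈ nehariPankov Xt J') :
    m u = u :=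
  hm.apply_eq_of_mem_raySum hu.1 hu ⟨1, zero_le_one, 0, Xt.zero_mem, by simp⟩

variable {Xp : Submodule ℝ X} {P : X →L[ℝ] X}

theorem apply_smul_apply (hm : IsNehariPankovMap Xt J J' m) (hP : IsSplittingProj Xp Xt P) {u : X}
    (hu : u ∈ nehariPankov Xt J') {c : ℝ} (hc : 0 < c) : m (c • P u) = u :=
  hm.apply_eq_of_mem_raySum (hP.smul_apply_notMem hc.ne' hu.1) hu (hP.mem_raySum_smul_apply hc u)

theorem le_of_mem_nehariPankov (hm : IsNehariPankovMap Xt J J' m) (hP : IsSplittingProj Xp Xt P)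
    {r a : ℝ} (hr : 0 < r) (ha : ∀ x ∈ Xp, ‖x‖ = r → a ≤ J x) {u : X}
    (hu : u ∈ nehariPankov Xt J') : a ≤ J u := by
  have hPu := hP.notMem_iff_norm_apply_pos.1 hu.1
  calc a ≤ J ((r / ‖P u‖) • P u) := ha _ (Xp.smul_mem _ (hP.apply_mem u)) <| by
        rw [norm_smul, Real.norm_eq_abs, abs_of_pos (by positivity), div_mul_cancel₀ _ hPu.ne']
    _ ≤ J (m u) := hm.le_apply hu.1 (hP.smul_apply_mem_raySum (by positivity) u)
    _ = J u := by rw [hm.apply_self hu]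

end IsNehariPankovMap

variable {Xp Xt : Submodule ℝ X} {P : X →L[ℝ] X} {J I : X → ℝ} {J' : X → X →L[ℝ] ℝ} {m : X → X}

theorem eventually_lt_of_tTendsto (hJI : ∀ x, J x = 1 / 2 * ‖P x‖ ^ 2 - I x)
    (hA2 : ∀ u v, TTendsto P u v → ∀ b < I v, ∀ᶠ n in atTop, b < I (u n))
    {W : ℕ → X} {w : X} (hW : TTendsto P W w) {c : ℝ} (hc : J w < c) :
    ∀ᶠ k in atTop, J (W k) < c := by
  set η := (c - J w) / 2 with hη
  have hnorm : Tendsto (fun k => 1 / 2 * ‖P (W k)‖ ^ 2) atTop (𝓝 (1 / 2 * ‖P w‖ ^ 2)) :=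
    (hW.1.norm.pow 2).const_mul _
  filter_upwards [hA2 W w hW (I w - η) (by linarith), (tendsto_order.1 hnorm).2 _
    (lt_add_of_pos_right _ (by linarith : 0 < η))] with k hI hP
  linarith [hJI w, hJI (W k)]

theorem IsNehariPankovMap.tendsto_of_tTendsto (hm : IsNehariPankovMap Xt J J' m)
    (hJI : ∀ x, J x = 1 / 2 * ‖P x‖ ^ 2 - I x)
    (hA2 : ∀ u v, TTendsto P u v → ∀ b < I v, ∀ᶠ n in atTop, b < I (u n))
    (hA3 : ∀ u v, TTendsto P u v → Tendsto (fun n => I (u n)) atTop (𝓝 (I v)) →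
      Tendsto u atTop (𝓝 v))
    {x : X} (hx : x ∉ Xt) {W : ℕ → X} {w : X} (hw : w ∈ raySum Xt x) (hW : TTendsto P W w)
    (hlow : ∀ b < J (m x), ∀ᶠ k in atTop, b < J (W k)) : Tendsto W atTop (𝓝 (m x)) := by
  have hle : J (m x) ≤ J w := le_of_not_gt fun hlt => by
    obtain ⟨c, hwc, hcm⟩ := exists_between hlt
    obtain ⟨k, h₁, h₂⟩ := ((eventually_lt_of_tTendsto hJI hA2 hW hwc).and (hlow c hcm)).exists
    exact h₁.not_gt h₂
  have hwm : w = m x := by_contra fun hne => (hm.lt_of_ne x hx w hw hne).not_ge hle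
  subst hwm
  have hJ : Tendsto (fun k => J (W k)) atTop (𝓝 (J (m x))) :=
    tendsto_order.2 ⟨hlow, fun c hc => eventually_lt_of_tTendsto hJI hA2 hW hc⟩
  refine hA3 W (m x) hW ?_
  have hI : ∀ y, I y = 1 / 2 * ‖P y‖ ^ 2 - J y := fun y => by rw [hJI]; ring
  simp only [hI]
  exact ((hW.1.norm.pow 2).const_mul _).sub hJ

theorem IsNehariPankovMap.lowerSemicontinuousAt (hm : IsNehariPankovMap Xt J J' m)
    (hXt : IsClosed (Xt : Set X)) (hJ : Continuous J) {x : X} (hx : x ∉ Xt) :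
    LowerSemicontinuousAt (J ∘ m) x := by
  intro b hb
  obtain ⟨t, ht, v, hv, hmx⟩ := hm.mem_raySum x hx
  have hcont : Tendsto (fun y => J (t • y + v)) (𝓝 x) (𝓝 (J (m x))) :=
    hmx ▸ (hJ.tendsto _).comp ((tendsto_id.const_smul t).add tendsto_const_nhds)
  filter_upwards [(tendsto_order.1 hcont).1 b hb, hXt.isOpen_compl.mem_nhds hx] with y hy hyXt
  exact hy.trans_le (hm.le_apply hyXt ⟨t, ht, v, hv, rfl⟩)

theorem IsSplittingProj.exists_subseq_tTendsto
    (hrefl : Function.Surjective (inclusionInDoubleDual ℝ X)) (hP : IsSplittingProj Xp Xt P)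
    (hXt : IsClosed (Xt : Set X)) {y : ℕ → X} {x : X} (hy : Tendsto y atTop (𝓝 x))
    {s : ℕ → ℝ} {S : ℝ} (hs : ∀ k, s k ∈ Icc 0 S) {v : ℕ → X} (hv : ∀ k, v k ∈ Xt) {V : ℝ}
    (hvV : ∀ k, ‖v k‖ ≤ V) :
    ∃ σ : ℕ → ℕ, StrictMono σ ∧ ∃ w ∈ raySum Xt x,
      TTendsto P (fun k => s (σ k) • y (σ k) + v (σ k)) w := by
  obtain ⟨c, hc, σ₁, hσ₁, hsc⟩ := isCompact_Icc.tendsto_subseq hs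
  obtain ⟨σ₂, hσ₂, xt, hvxt⟩ := exists_subseq_forall_dual_tendsto hrefl fun k => hvV (σ₁ k)
  have hxt : xt ∈ Xt := Xt.mem_of_forall_dual_tendsto hXt (fun k => hv _) hvxt
  have hPv : ∀ k, P (v k) = 0 := fun k => (hP.mem_iff_apply_eq_zero _).1 (hv k)
  have hsc' : Tendsto (fun k => s (σ₁ (σ₂ k))) atTop (𝓝 c) := hsc.comp hσ₂.tendsto_atTop
  have hy' : Tendsto (fun k => y (σ₁ (σ₂ k))) atTop (𝓝 x) :=
    hy.comp (hσ₁.comp hσ₂).tendsto_atTop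
  refine ⟨σ₁ ∘ σ₂, hσ₁.comp hσ₂, c • x + xt, ⟨c, hc.1, xt, hxt, rfl⟩, ?_, fun φ => ?_⟩
  · simpa [hPv, (hP.mem_iff_apply_eq_zero xt).1 hxt] using
      hsc'.smul (P.continuous.tendsto x |>.comp hy')
  · have hrw : ∀ k, s k • y k + v k - P (s k • y k + v k) = s k • (y k - P (y k)) + v k :=
      fun k => by simp only [map_add, map_smul, hPv, add_zero]; module
    have hrw' : c • x + xt - P (c • x + xt) = c • (x - P x) + xt := by
      simp only [map_add, map_smul, (hP.mem_iff_apply_eq_zero xt).1 hxt, add_zero]; module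
    simp only [Function.comp_apply, hrw, hrw']
    simp only [map_add, map_smul, smul_eq_mul]
    have hQy := (φ.continuous.comp (continuous_id.sub P.continuous)).tendsto x |>.comp hy'
    exact (hsc'.mul hQy).add (hvxt φ)

theorem IsNehariPankovMap.exists_bounded_decomposition (hm : IsNehariPankovMap Xt J J' m)
    (hP : IsSplittingProj Xp Xt P)
    (hbdd : ∀ K : Set X, IsCompact K → (∀ x ∈ K, x ∉ Xt) → Bornology.IsBounded (m '' K))
    {y : ℕ → X} {x : X} (hy : Tendsto y atTop (𝓝 x)) (hyXt : ∀ k, y k ∉ Xt) (hx : x ∉ Xt) :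
    ∃ S V : ℝ, ∀ k, ∃ s ∈ Icc 0 S, ∃ v ∈ Xt, ‖v‖ ≤ V ∧ m (y k) = s • y k + v := by
  set K := insert x (range y)
  have hK : IsCompact K := hy.isCompact_insert_range
  have hKXt : ∀ z ∈ K, z ∉ Xt := by
    rintro z (rfl | ⟨k, rfl⟩)
    exacts [hx, hyXt k]
  obtain ⟨M, hM⟩ := (hbdd K hK hKXt).exists_norm_le
  obtain ⟨R, hR⟩ := hK.isBounded.exists_norm_le
  obtain ⟨z₀, hz₀K, hz₀⟩ := hK.exists_isMinOn ⟨x, mem_insert _ _⟩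
    (continuous_norm.comp P.continuous).continuousOn
  have hμ := hP.notMem_iff_norm_apply_pos.1 (hKXt z₀ hz₀K)
  refine ⟨M / ‖P z₀‖, M + M / ‖P z₀‖ * R, fun k => ?_⟩
  have hyK : y k ∈ K := mem_insert_of_mem _ ⟨k, rfl⟩
  obtain ⟨s, hs, v, hv, hmy⟩ := hm.mem_raySum _ (hyXt k)
  have hPm : ‖P (m (y k))‖ = s * ‖P (y k)‖ := hmy ▸ hP.norm_apply_smul_add hs _ hv
  have hmM : ‖m (y k)‖ ≤ M := hM _ ⟨y k, hyK, rfl⟩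
  have hsS : s ≤ M / ‖P z₀‖ := by
    rw [le_div_iff₀ hμ]
    nlinarith [hP.norm_apply_le (m (y k)), show ‖P z₀‖ ≤ ‖P (y k)‖ from hz₀ hyK]
  refine ⟨s, ⟨hs, hsS⟩, v, hv, ?_, hmy⟩
  calc ‖v‖ = ‖m (y k) - s • y k‖ := by rw [hmy, add_sub_cancel_left]
    _ ≤ ‖m (y k)‖ + s * ‖y k‖ := by
      simpa [norm_smul, abs_of_nonneg hs] using norm_sub_le (m (y k)) (s • y k)
    _ ≤ M + M / ‖P z₀‖ * R := by
      gcongr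
      · exact div_nonneg ((norm_nonneg (m (y k))).trans hmM) hμ.le
      · exact hR _ hyK

theorem IsNehariPankovMap.continuousAt (hm : IsNehariPankovMap Xt J J' m)
    (hrefl : Function.Surjective (inclusionInDoubleDual ℝ X)) (hP : IsSplittingProj Xp Xt P)
    (hXt : IsClosed (Xt : Set X)) (hJ : Continuous J) (hJI : ∀ x, J x = 1 / 2 * ‖P x‖ ^ 2 - I x)
    (hA2 : ∀ u v, TTendsto P u v → ∀ b < I v, ∀ᶠ n in atTop, b < I (u n))
    (hA3 : ∀ u v, TTendsto P u v → Tendsto (fun n => I (u n)) atTop (𝓝 (I v)) →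
      Tendsto u atTop (𝓝 v))
    (hbdd : ∀ K : Set X, IsCompact K → (∀ x ∈ K, x ∉ Xt) → Bornology.IsBounded (m '' K))
    {x : X} (hx : x ∉ Xt) : ContinuousAt m x := by
  refine tendsto_of_subseq_tendsto fun ns hns => ?_
  obtain ⟨N, hN⟩ := eventually_atTop.1 (hns.eventually (hXt.isOpen_compl.mem_nhds hx))
  set y := fun k => ns (k + N)
  have hy : Tendsto y atTop (𝓝 x) := hns.comp (tendsto_add_atTop_nat N)
  obtain ⟨S, V, hdec⟩ := hm.exists_bounded_decomposition hP hbdd hy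
    (fun k => hN _ (Nat.le_add_left N k)) hx
  choose s hs v hv hvV hmy using hdec
  obtain ⟨σ, hσ, w, hw, hW⟩ := hP.exists_subseq_tTendsto hrefl hXt hy hs hv hvV
  simp only [← hmy] at hW
  exact ⟨fun k => σ k + N, hm.tendsto_of_tTendsto hJI hA2 hA3 hx hw hW fun b hb =>
    (hy.comp hσ.tendsto_atTop).eventually (hm.lowerSemicontinuousAt hXt hJ hx b hb)⟩

theorem IsNehariPankovMap.sub_smul_mem (hm : IsNehariPankovMap Xt J J' m)
    (hP : IsSplittingProj Xp Xt P) {y : X} (hy : y ∉ Xt) :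
    m y - (‖P (m y)‖ / ‖P y‖) • y ∈ Xt := by
  obtain ⟨s, hs, v, hv, hmy⟩ := hm.mem_raySum y hy
  rw [hmy, hP.norm_apply_smul_add hs y hv,
    mul_div_cancel_right₀ s (hP.notMem_iff_norm_apply_pos.1 hy).ne', add_sub_cancel_left]
  exact hv

theorem IsNehariPankovMap.neg_le_mul_deriv (hm : IsNehariPankovMap Xt J J' m)
    (hP : IsSplittingProj Xp Xt P) (hXt : IsClosed (Xt : Set X))
    (hJd : ∀ x, HasFDerivAt J (J' x) x) (hJ'c : Continuous J') {x : X} (hx : x ∉ Xt)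
    (hmx : ContinuousAt m x) (z : X) {ε : ℝ}
    (hek : ∀ᶠ t in 𝓝[>] 0, J (m x) ≤ J (m (x + t • z)) + ε * (t * ‖z‖)) :
    -(ε * ‖z‖ * ‖P x‖) ≤ ‖P (m x)‖ * J' (m x) z := by
  set c : X → ℝ := fun y => ‖P (m y)‖ / ‖P y‖
  have hPx := hP.notMem_iff_norm_apply_pos.1 hx
  have hline : Tendsto (fun t : ℝ => x + t • z) (𝓝 0) (𝓝 x) := by
    simpa using tendsto_const_nhds.add ((tendsto_id (x := 𝓝 (0 : ℝ))).smul_const z)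
  have hc : ContinuousAt c x :=
    ((P.continuous.continuousAt.comp hmx).norm).div (P.continuous.continuousAt.norm) hPx.ne'
  have hlim := ((hasStrictFDerivAt_of_hasFDerivAt_of_continuousAt (Eventually.of_forall hJd)
    hJ'c.continuousAt).tendsto_sub_sub_smul_div ((hmx.tendsto.comp hline).mono_left
      nhdsWithin_le_nhds) (((hc.tendsto.comp hline).smul_const z).mono_left
      nhdsWithin_le_nhds)).mono_left (nhdsGT_le_nhdsNE 0)
  have hge : ∀ᶠ t in 𝓝[>] 0, -(ε * ‖z‖) ≤
      (J (m (x + t • z)) - J (m (x + t • z) - t • (c (x + t • z) • z))) / t := by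
    filter_upwards [hek, self_mem_nhdsWithin, (hline.eventually
      (hXt.isOpen_compl.mem_nhds hx)).filter_mono nhdsWithin_le_nhds] with t hJt (ht : 0 < t) hy
    -- `m (x + t z) - t c z = c x + ṽ` lies in `X̂(x)`, on which `J` is maximal at `m x`
    have hmem : m (x + t • z) - t • (c (x + t • z) • z) ∈ raySum Xt x :=
      ⟨c (x + t • z), by positivity, _, hm.sub_smul_mem hP hy, by module⟩
    rw [le_div_iff₀ ht]
    linarith [hm.le_apply hx hmem]
  have hfin := ge_of_tendsto hlim hge
  rw [map_smul, smul_eq_mul] at hfin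
  calc -(ε * ‖z‖ * ‖P x‖) = -(ε * ‖z‖) * ‖P x‖ := by ring
    _ ≤ c x * J' (m x) z * ‖P x‖ := mul_le_mul_of_nonneg_right hfin hPx.le
    _ = ‖P (m x)‖ * J' (m x) z := by
      rw [mul_right_comm, div_mul_cancel₀ _ hPx.ne']

theorem IsNehariPankovMap.exists_ekeland_point [CompleteSpace X] (hm : IsNehariPankovMap Xt J J' m)
    (hP : IsSplittingProj Xp Xt P) (hXp : IsClosed (Xp : Set X)) (hJ : Continuous J)
    (hmc : ∀ x ∉ Xt, ContinuousAt m x) (hmN : ∀ u ∉ Xt, m u ∉ Xt) {c₀ : ℝ}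
    (hc₀ : ∀ u ∈ nehariPankov Xt J', c₀ ≤ J u) {ε : ℝ} (hε : 0 < ε) {u₀ : X}
    (hu₀ : u₀ ∈ nehariPankov Xt J') (hJu₀ : J u₀ ≤ c₀ + ε / 2) :
    ∃ x ∈ Xp, ‖x‖ ∈ Ioo 1 3 ∧ J (m x) ≤ J u₀ ∧
      ∀ y ∈ Xp, ‖y‖ ∈ Icc 1 3 → J (m x) ≤ J (m y) + ε * ‖x - y‖ := by
  set A : Set X := {w | w ∈ Xp ∧ ‖w‖ ∈ Icc 1 3}
  have hA : IsClosed A := hXp.inter (isClosed_Icc.preimage continuous_norm)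
  have : CompleteSpace A := hA.completeSpace_coe
  have hAXt : ∀ w ∈ A, w ∉ Xt := fun w hw => hP.notMem_iff_norm_apply_pos.2
    (by rw [hP.apply_eq_self w hw.1]; linarith [hw.2.1])
  set f : A → ℝ := fun w => J (m w)
  have hf : Continuous f := continuous_iff_continuousAt.2 fun w =>
    (hJ.continuousAt.comp (hmc w (hAXt w w.2))).comp continuous_subtype_val.continuousAt
  have hfc₀ : ∀ w, c₀ ≤ f w := fun w =>
    hc₀ _ (hm.mem_nehariPankov (hAXt w w.2) (hmN _ (hAXt w w.2)))
  have hPu₀ := hP.notMem_iff_norm_apply_pos.1 hu₀.1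
  have hx₀ : ‖(2 / ‖P u₀‖) • P u₀‖ = 2 := by
    rw [norm_smul, Real.norm_eq_abs, abs_of_pos (by positivity), div_mul_cancel₀ _ hPu₀.ne']
  set x₀ : A := ⟨(2 / ‖P u₀‖) • P u₀, Xp.smul_mem _ (hP.apply_mem u₀), by rw [hx₀]; norm_num,
    by rw [hx₀]; norm_num⟩
  have hfx₀ : f x₀ = J u₀ := by
    change J (m ((2 / ‖P u₀‖) • P u₀)) = J u₀
    rw [hm.apply_smul_apply hP hu₀ (by positivity)]
  obtain ⟨x, hxx₀, hx⟩ := hf.lowerSemicontinuous.exists_ekeland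
    ⟨c₀, by rintro _ ⟨w, rfl⟩; exact hfc₀ w⟩ hε x₀
  rw [Subtype.dist_eq, dist_eq_norm, hfx₀] at hxx₀
  have hclose : ‖(x : X) - x₀‖ ≤ 1 / 2 := by nlinarith [hfc₀ x]
  have hfx : f x ≤ J u₀ := by nlinarith [norm_nonneg ((x : X) - x₀)]
  refine ⟨x, x.2.1, ⟨?_, ?_⟩, hfx,
    fun y hy hyn => by simpa [Subtype.dist_eq, dist_eq_norm] using hx ⟨y, hy, hyn⟩⟩
  · linarith [norm_sub_norm_le (x₀ : X) x, norm_sub_rev (x : X) x₀]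
  · linarith [norm_sub_norm_le (x : X) x₀]

theorem IsNehariPankovMap.exists_almost_critical [CompleteSpace X]
    (hm : IsNehariPankovMap Xt J J' m) (hP : IsSplittingProj Xp Xt P) (hXp : IsClosed (Xp : Set X))
    (hXt : IsClosed (Xt : Set X)) (hJd : ∀ x, HasFDerivAt J (J' x) x) (hJ'c : Continuous J')
    (hmc : ∀ x ∉ Xt, ContinuousAt m x) {δ : ℝ} (hδ : 0 < δ) (hlb : ∀ u ∉ Xt, δ ≤ ‖P (m u)‖)
    {c₀ : ℝ} (hc₀ : ∀ u ∈ nehariPankov Xt J', c₀ ≤ J u) {ε : ℝ} (hε : 0 < ε) {u₀ : X}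
    (hu₀ : u₀ ∈ nehariPankov Xt J') (hJu₀ : J u₀ ≤ c₀ + ε / 2) :
    ∃ u ∈ nehariPankov Xt J', J u ≤ J u₀ ∧ ‖J' u‖ ≤ 3 / δ * ε := by
  have hmN : ∀ u ∉ Xt, m u ∉ Xt := fun u hu =>
    hP.notMem_iff_norm_apply_pos.2 (hδ.trans_le (hlb u hu))
  obtain ⟨x, hxXp, hxn, hJx, hek⟩ := hm.exists_ekeland_point hP hXp
    (continuous_iff_continuousAt.2 fun x => (hJd x).continuousAt) hmc hmN hc₀ hε hu₀ hJu₀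
  have hxXt : x ∉ Xt := hP.notMem_iff_norm_apply_pos.2
    (by rw [hP.apply_eq_self x hxXp]; exact zero_lt_one.trans hxn.1)
  have hmx := hm.mem_nehariPankov hxXt (hmN x hxXt)
  refine ⟨m x, hmx, hJx, hP.norm_le_of_forall_neg_le hmx.2.2 (by positivity) fun z hz => ?_⟩
  have hline : ∀ᶠ t : ℝ in 𝓝 0, ‖x + t • z‖ ∈ Ioo 1 3 := by
    have : Tendsto (fun t : ℝ => ‖x + t • z‖) (𝓝 0) (𝓝 ‖x‖) := by
      simpa using (tendsto_const_nhds.add ((tendsto_id (x := 𝓝 (0 : ℝ))).smul_const z)).norm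
    exact this.eventually (Ioo_mem_nhds hxn.1 hxn.2)
  have hek' : ∀ᶠ t in 𝓝[>] 0, J (m x) ≤ J (m (x + t • z)) + ε * (t * ‖z‖) := by
    filter_upwards [hline.filter_mono nhdsWithin_le_nhds, self_mem_nhdsWithin]
      with t ht (htpos : 0 < t)
    have := hek _ (Xp.add_mem hxXp (Xp.smul_mem t hz)) (Ioo_subset_Icc_self ht)
    rwa [sub_add_cancel_left, norm_neg, norm_smul, Real.norm_eq_abs, abs_of_pos htpos] at this
  have hderiv := hm.neg_le_mul_deriv hP hXt hJd hJ'c hxXt (hmc x hxXt) z hek'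
  rw [hP.apply_eq_self x hxXp] at hderiv
  rcases le_or_gt 0 (J' (m x) z) with h | h
  · exact le_trans (by rw [neg_nonpos]; positivity) h
  · have h₁ := mul_le_mul_of_nonneg_right (hlb x hxXt) (neg_nonneg.2 h.le)
    have h₂ := mul_le_mul_of_nonneg_left hxn.2.le (mul_nonneg hε.le (norm_nonneg z))
    have h₃ : δ * -J' (m x) z ≤ 3 * (ε * ‖z‖) := by linarith
    rw [neg_le]
    calc -J' (m x) z = δ * -J' (m x) z / δ := by field_simp
      _ ≤ 3 * (ε * ‖z‖) / δ := by gcongr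
      _ = 3 / δ * ε * ‖z‖ := by ring

end NehariPankov

theorem groundstate_PS_sequence_general
    {X : Type*} [NormedAddCommGroup X] [NormedSpace ℝ X] [CompleteSpace X]
    -- X is reflexive
    (hrefl : Function.Surjective (NormedSpace.inclusionInDoubleDual ℝ X))
    -- topological direct sum decomposition X = X⁺ ⊕ X̃, with projection P onto X⁺ along X̃
    (Xp Xt : Submodule ℝ X)
    (hXpcl : IsClosed (Xp : Set X)) (hXtcl : IsClosed (Xt : Set X))
    (P : X →L[ℝ] X)
    (hPm : ∀ x : X, P x ∈ Xp) (hQm : ∀ x : X, x - P x ∈ Xt)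
    (hPp : ∀ x ∈ Xp, P x = x) (hPt : ∀ x ∈ Xt, P x = 0)
    -- ‖u‖² = ‖u⁺‖² + ‖ũ‖²
    (hnorm : ∀ x : X, ‖x‖ ^ 2 = ‖P x‖ ^ 2 + ‖x - P x‖ ^ 2)
    -- J, I of class C¹ with J(u) = ½‖u⁺‖² - I(u)
    (J I : X → ℝ) (J' : X → X →L[ℝ] ℝ)
    (hJd : ∀ x, HasFDerivAt J (J' x) x) (hJ'c : Continuous J')
    (hJI : ∀ x : X, J x = (1 / 2) * ‖P x‖ ^ 2 - I x)
    -- (A2) : T-convergence implies liminf I(uₙ) ≥ I(v)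
    (hA2 : ∀ (u : ℕ → X) (v : X),
      Tendsto (fun n => P (u n)) atTop (𝓝 (P v)) →
      (∀ φ : X →L[ℝ] ℝ, Tendsto (fun n => φ (u n - P (u n))) atTop (𝓝 (φ (v - P v)))) →
      ∀ b : ℝ, b < I v → ∀ᶠ n in atTop, b < I (u n))
    -- (A3)
    (hA3 : ∀ (u : ℕ → X) (v : X),
      Tendsto (fun n => P (u n)) atTop (𝓝 (P v)) →
      (∀ φ : X →L[ℝ] ℝ, Tendsto (fun n => φ (u n - P (u n))) atTop (𝓝 (φ (v - P v)))) →
      Tendsto (fun n => I (u n)) atTop (𝓝 (I v)) →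
      Tendsto u atTop (𝓝 v))
    -- (A4)
    (r a : ℝ) (hr : 0 < r)
    (ha_def : a = sInf (J '' {x : X | x ∈ Xp ∧ ‖x‖ = r})) (ha : 0 < a)
    -- (A5) : m̂(u) is the unique nontrivial critical point of J|_{X(u)} in X̂(u), and the
    -- unique global maximum of J on X̂(u)
    (m : X → X)
    (hm_mem : ∀ u ∉ Xt, ∃ t : ℝ, 0 ≤ t ∧ ∃ v ∈ Xt, m u = t • u + v)
    (hm_crit : ∀ u ∉ Xt, ∀ z : X, (∃ t : ℝ, ∃ v ∈ Xt, z = t • u + v) → J' (m u) z = 0)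
    (hm_unique : ∀ u ∉ Xt, ∀ w : X, (∃ t : ℝ, 0 ≤ t ∧ ∃ v ∈ Xt, w = t • u + v) → w ≠ 0 →
      (∀ z : X, (∃ t : ℝ, ∃ v ∈ Xt, z = t • u + v) → J' w z = 0) → w = m u)
    (hm_max : ∀ u ∉ Xt, ∀ w : X, (∃ t : ℝ, 0 ≤ t ∧ ∃ v ∈ Xt, w = t • u + v) →
      w ≠ m u → J w < J (m u))
    -- (A6)
    (δ : ℝ) (hδ : 0 < δ) (hm_lb : ∀ u ∉ Xt, δ ≤ ‖P (m u)‖)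
    (hm_bdd : ∀ K : Set X, IsCompact K → (∀ x ∈ K, x ∉ Xt) →
      Bornology.IsBounded (m '' K)) :
    0 < a ∧
    a ≤ sInf (J '' {u : X | u ∉ Xt ∧ J' u u = 0 ∧ ∀ v ∈ Xt, J' u v = 0}) ∧
    ∃ u : ℕ → X,
      (∀ n, (u n) ∈ {u : X | u ∉ Xt ∧ J' u u = 0 ∧ ∀ v ∈ Xt, J' u v = 0}) ∧
      Tendsto (fun n => J (u n)) atTop
        (𝓝 (sInf (J '' {u : X | u ∉ Xt ∧ J' u u = 0 ∧ ∀ v ∈ Xt, J' u v = 0}))) ∧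
      Tendsto (fun n => ‖J' (u n)‖) atTop (𝓝 0) := by
  have hP : IsSplittingProj Xp Xt P :=
    ⟨hPm, hPp, fun x => ⟨hPt x, fun h => by simpa [h] using hQm x⟩,
      fun x => by nlinarith [hnorm x, norm_nonneg (P x), norm_nonneg x, norm_nonneg (x - P x)]⟩
  have hm : IsNehariPankovMap Xt J J' m := ⟨hm_mem, hm_crit, hm_unique, hm_max⟩
  have hmc : ∀ x ∉ Xt, ContinuousAt m x := fun x hx =>
    hm.continuousAt hrefl hP hXtcl (continuous_iff_continuousAt.2 fun x => (hJd x).continuousAt)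
      hJI (fun u v h => hA2 u v h.1 h.2) (fun u v h => hA3 u v h.1 h.2) hm_bdd hx
  -- in `ℝ`, `sInf` of an empty or unbounded-below set is `0`, so `0 < a` rules both out
  obtain ⟨x₀, hx₀Xp, hx₀r⟩ : {x : X | x ∈ Xp ∧ ‖x‖ = r}.Nonempty := by
    refine nonempty_iff_ne_empty.2 fun h => ha.ne' ?_
    rw [ha_def, h, image_empty, Real.sInf_empty]
  have hbdd : BddBelow (J '' {x : X | x ∈ Xp ∧ ‖x‖ = r}) :=
    by_contra fun h => ha.ne' (ha_def.trans (Real.sInf_of_not_bddBelow h))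
  have hNa : ∀ u ∈ nehariPankov Xt J', a ≤ J u := fun u => hm.le_of_mem_nehariPankov hP hr
    fun x hx hxr => ha_def ▸ csInf_le hbdd ⟨x, ⟨hx, hxr⟩, rfl⟩
  have hx₀ : x₀ ∉ Xt := hP.notMem_iff_norm_apply_pos.2 (by rwa [hP.apply_eq_self x₀ hx₀Xp, hx₀r])
  have hN : (nehariPankov Xt J').Nonempty :=
    ⟨m x₀, hm.mem_nehariPankov hx₀ (hP.notMem_iff_norm_apply_pos.2 (hδ.trans_le (hm_lb x₀ hx₀)))⟩
  have hc₀ : ∀ u ∈ nehariPankov Xt J', sInf (J '' nehariPankov Xt J') ≤ J u := fun u hu =>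
    csInf_le ⟨a, forall_mem_image.2 hNa⟩ ⟨u, hu, rfl⟩
  refine ⟨ha, le_csInf (hN.image J) (forall_mem_image.2 hNa),
    exists_seq_tendsto_of_forall_pos (K := 3 / δ) hc₀ (fun _ => norm_nonneg _) fun ε hε => ?_⟩
  obtain ⟨_, ⟨u₀, hu₀, rfl⟩, hJu₀⟩ :=
    exists_lt_of_csInf_lt (hN.image J) (lt_add_of_pos_right _ (half_pos hε))
  obtain ⟨u, hu, hJu, hJ'u⟩ := hm.exists_almost_critical hP hXpcl hXtcl hJd hJ'c hmc hδ hm_lb hc₀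
    hε hu₀ hJu₀.le
  exact ⟨u, hu, by linarith, hJ'u⟩

/-- Under assumptions (A1)–(A6), with `c₀ = inf_N J` where `N` is the
Nehari–Pankov manifold of `J`, one has `c₀ ≥ a > 0` and `J` has a `(PS)_{c₀}`-sequence in `N`. -/
theorem groundstate_PS_sequence
    {X : Type*} [NormedAddCommGroup X] [NormedSpace ℝ X] [CompleteSpace X]
    -- X is reflexive
    (hrefl : Function.Surjective (NormedSpace.inclusionInDoubleDual ℝ X))
    -- topological direct sum decomposition X = X⁺ ⊕ X̃, with projection P onto X⁺ along X̃
    (Xp Xt : Submodule ℝ X)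
    (hXpcl : IsClosed (Xp : Set X)) (hXtcl : IsClosed (Xt : Set X))
    (P : X →L[ℝ] X)
    (hPm : ∀ x : X, P x ∈ Xp) (hQm : ∀ x : X, x - P x ∈ Xt)
    (hPp : ∀ x ∈ Xp, P x = x) (hPt : ∀ x ∈ Xt, P x = 0)
    -- ‖u‖² = ‖u⁺‖² + ‖ũ‖²
    (hnorm : ∀ x : X, ‖x‖ ^ 2 = ‖P x‖ ^ 2 + ‖x - P x‖ ^ 2)
    -- u ↦ ‖u‖² is C¹ on X⁺
    (hC1 : ContDiffOn ℝ 1 (fun x : X => ‖x‖ ^ 2) (Xp : Set X))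
    -- J, I of class C¹ with J(u) = ½‖u⁺‖² - I(u)
    (J I : X → ℝ) (J' I' : X → X →L[ℝ] ℝ)
    (hJd : ∀ x, HasFDerivAt J (J' x) x) (hJ'c : Continuous J')
    (hId : ∀ x, HasFDerivAt I (I' x) x) (hI'c : Continuous I')
    (hJI : ∀ x : X, J x = (1 / 2) * ‖P x‖ ^ 2 - I x)
    -- (A1)
    (hI0 : I 0 = 0) (hIpos : ∀ x : X, 0 ≤ I x)
    -- (A2) : T-convergence implies liminf I(uₙ) ≥ I(v)
    (hA2 : ∀ (u : ℕ → X) (v : X),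
      Tendsto (fun n => P (u n)) atTop (𝓝 (P v)) →
      (∀ φ : X →L[ℝ] ℝ, Tendsto (fun n => φ (u n - P (u n))) atTop (𝓝 (φ (v - P v)))) →
      ∀ b : ℝ, b < I v → ∀ᶠ n in atTop, b < I (u n))
    -- (A3)
    (hA3 : ∀ (u : ℕ → X) (v : X),
      Tendsto (fun n => P (u n)) atTop (𝓝 (P v)) →
      (∀ φ : X →L[ℝ] ℝ, Tendsto (fun n => φ (u n - P (u n))) atTop (𝓝 (φ (v - P v)))) →
      Tendsto (fun n => I (u n)) atTop (𝓝 (I v)) →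
      Tendsto u atTop (𝓝 v))
    -- (A4)
    (r a : ℝ) (hr : 0 < r)
    (ha_def : a = sInf (J '' {x : X | x ∈ Xp ∧ ‖x‖ = r})) (ha : 0 < a)
    -- (A5) : m̂(u) is the unique nontrivial critical point of J|_{X(u)} in X̂(u), and the
    -- unique global maximum of J on X̂(u)
    (m : X → X)
    (hm_mem : ∀ u ∉ Xt, ∃ t : ℝ, 0 ≤ t ∧ ∃ v ∈ Xt, m u = t • u + v)
    (hm_ne : ∀ u ∉ Xt, m u ≠ 0)
    (hm_crit : ∀ u ∉ Xt, ∀ z : X, (∃ t : ℝ, ∃ v ∈ Xt, z = t • u + v) → J' (m u) z = 0)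
    (hm_unique : ∀ u ∉ Xt, ∀ w : X, (∃ t : ℝ, 0 ≤ t ∧ ∃ v ∈ Xt, w = t • u + v) → w ≠ 0 →
      (∀ z : X, (∃ t : ℝ, ∃ v ∈ Xt, z = t • u + v) → J' w z = 0) → w = m u)
    (hm_max : ∀ u ∉ Xt, ∀ w : X, (∃ t : ℝ, 0 ≤ t ∧ ∃ v ∈ Xt, w = t • u + v) →
      w ≠ m u → J w < J (m u))
    -- (A6)
    (δ : ℝ) (hδ : 0 < δ) (hm_lb : ∀ u ∉ Xt, δ ≤ ‖P (m u)‖)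
    (hm_bdd : ∀ K : Set X, IsCompact K → (∀ x ∈ K, x ∉ Xt) →
      Bornology.IsBounded (m '' K)) :
    0 < a ∧
    a ≤ sInf (J '' {u : X | u ∉ Xt ∧ J' u u = 0 ∧ ∀ v ∈ Xt, J' u v = 0}) ∧
    ∃ u : ℕ → X,
      (∀ n, (u n) ∈ {u : X | u ∉ Xt ∧ J' u u = 0 ∧ ∀ v ∈ Xt, J' u v = 0}) ∧
      Tendsto (fun n => J (u n)) atTop
        (𝓝 (sInf (J '' {u : X | u ∉ Xt ∧ J' u u = 0 ∧ ∀ v ∈ Xt, J' u v = 0}))) ∧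
      Tendsto (fun n => ‖J' (u n)‖) atTop (𝓝 0) :=
  groundstate_PS_sequence_general hrefl Xp Xt hXpcl hXtcl P hPm hQm hPp hPt hnorm J I J' hJd hJ'c
    hJI hA2 hA3 r a hr ha_def ha m hm_mem hm_crit hm_unique hm_max δ hδ hm_lb hm_bdd
end

section
/- Assume (A1), (A2), (A4), and (B1)–(B3), and assume in addition that X⁺ is a Hilbert space whose scalar product satisfies ⟨u,u⟩ = ‖u‖² for all u ∈ X⁺. Let m̂(u) denote, for u ∈ X∖X̃, the unique global maximum of J on X̂(u) (which exists by the previous part of the proposition). Then assumption (A6) holds: there exists δ > 0 such that ‖m̂(u)⁺‖ ≥ δ for all u ∈ X∖X̃, and for every compact subset K ⊂ X∖X̃ the set {m̂(u) : u ∈ K} is bounded. -/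
open Filter Topology

/-- Under (A1), (A2), (A4), (B1)–(B3), with `X⁺` a Hilbert space whose
scalar product generates the norm, and `m̂(u)` the unique global maximum of `J` on `X̂(u)`,
assumption (A6) holds: `‖m̂(u)⁺‖ ≥ δ > 0` uniformly, and `m̂` maps compact subsets of
`X∖X̃` to bounded sets. -/
theorem A6_holds
    {X : Type*} [NormedAddCommGroup X] [NormedSpace ℝ X] [CompleteSpace X]
    -- X is reflexive
    (hrefl : Function.Surjective (NormedSpace.inclusionInDoubleDual ℝ X))
    -- topological direct sum decomposition X = X⁺ ⊕ X̃, with projection P onto X⁺ along X̃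
    (Xp Xt : Submodule ℝ X)
    (hXpcl : IsClosed (Xp : Set X)) (hXtcl : IsClosed (Xt : Set X))
    (P : X →L[ℝ] X)
    (hPm : ∀ x : X, P x ∈ Xp) (hQm : ∀ x : X, x - P x ∈ Xt)
    (hPp : ∀ x ∈ Xp, P x = x) (hPt : ∀ x ∈ Xt, P x = 0)
    -- ‖u‖² = ‖u⁺‖² + ‖ũ‖²
    (hnorm : ∀ x : X, ‖x‖ ^ 2 = ‖P x‖ ^ 2 + ‖x - P x‖ ^ 2)
    -- J, I of class C¹ with J(u) = ½‖u⁺‖² - I(u)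
    (J I : X → ℝ) (J' I' : X → X →L[ℝ] ℝ)
    (hJd : ∀ x, HasFDerivAt J (J' x) x) (hJ'c : Continuous J')
    (hId : ∀ x, HasFDerivAt I (I' x) x) (hI'c : Continuous I')
    (hJI : ∀ x : X, J x = (1 / 2) * ‖P x‖ ^ 2 - I x)
    -- X⁺ is a Hilbert space with ⟨u,u⟩ = ‖u‖² (parallelogram law on X⁺)
    (hpar : ∀ u ∈ Xp, ∀ v ∈ Xp, ‖u + v‖ ^ 2 + ‖u - v‖ ^ 2 = 2 * ‖u‖ ^ 2 + 2 * ‖v‖ ^ 2)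
    -- (A1)
    (hI0 : I 0 = 0) (hIpos : ∀ x : X, 0 ≤ I x)
    -- (A2) : T-convergence implies liminf I(uₙ) ≥ I(v)
    (hA2 : ∀ (u : ℕ → X) (v : X),
      Tendsto (fun n => P (u n)) atTop (𝓝 (P v)) →
      (∀ φ : X →L[ℝ] ℝ, Tendsto (fun n => φ (u n - P (u n))) atTop (𝓝 (φ (v - P v)))) →
      ∀ b : ℝ, b < I v → ∀ᶠ n in atTop, b < I (u n))
    -- (A4)
    (r a : ℝ) (hr : 0 < r)
    (ha_def : a = sInf (J '' {x : X | x ∈ Xp ∧ ‖x‖ = r})) (ha : 0 < a)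
    -- (B1) : ‖u⁺‖ + I(u) → ∞ as ‖u‖ → ∞
    (hB1 : ∀ M : ℝ, ∃ R : ℝ, ∀ u : X, R ≤ ‖u‖ → M ≤ ‖P u‖ + I u)
    -- (B2)
    (hB2 : ∀ (t : ℕ → ℝ) (u : ℕ → X) (w : X), w ∈ Xp → w ≠ 0 →
      Tendsto t atTop atTop → Tendsto (fun n => P (u n)) atTop (𝓝 w) →
      Tendsto (fun n => I (t n • u n) / (t n) ^ 2) atTop atTop)
    -- (B3)
    (hB3 : ∀ (u : X) (t : ℝ) (v : X), 0 ≤ t → v ∈ Xt → t • u + v ≠ u →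
      ((t ^ 2 - 1) / 2) * I' u u + t * I' u v + I u - I (t • u + v) < 0)
    -- m̂(u) is the unique global maximum of J on X̂(u), for u ∉ X̃
    (m : X → X)
    (hm_mem : ∀ u ∉ Xt, ∃ t : ℝ, 0 ≤ t ∧ ∃ v ∈ Xt, m u = t • u + v)
    (hm_max : ∀ u ∉ Xt, ∀ w : X, (∃ t : ℝ, 0 ≤ t ∧ ∃ v ∈ Xt, w = t • u + v) →
      w ≠ m u → J w < J (m u)) :
    ∃ δ : ℝ, 0 < δ ∧
      (∀ u ∉ Xt, δ ≤ ‖P (m u)‖) ∧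
      (∀ K : Set X, IsCompact K → (∀ x ∈ K, x ∉ Xt) → Bornology.IsBounded (m '' K)) := by

  -- `P u ≠ 0` when `u ∉ Xt`
  have hPne : ∀ u ∉ Xt, P u ≠ 0 := by
    intro u hu h
    exact hu (by simpa [h, sub_zero] using hQm u)
  -- Step 1 : `a ≤ J (m u)` for every `u ∉ Xt`
  have haJ : ∀ u ∉ Xt, a ≤ J (m u) := by
    intro u hu
    have hPu : P u ≠ 0 := hPne u hu
    have hPupos : 0 < ‖P u‖ := norm_pos_iff.2 hPu
    set s : ℝ := r / ‖P u‖ with hs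
    have hs0 : 0 ≤ s := le_of_lt (div_pos hr hPupos)
    set w : X := s • P u with hw
    have hwXp : w ∈ Xp := Submodule.smul_mem _ _ (hPm u)
    have hwnorm : ‖w‖ = r := by
      rw [hw, norm_smul, Real.norm_eq_abs, abs_of_nonneg hs0, hs,
        div_mul_cancel₀ _ (ne_of_gt hPupos)]
    have hwS : J w ∈ J '' {x : X | x ∈ Xp ∧ ‖x‖ = r} := ⟨w, ⟨hwXp, hwnorm⟩, rfl⟩
    have haw : a ≤ J w := by
      by_cases hbdd : BddBelow (J '' {x : X | x ∈ Xp ∧ ‖x‖ = r})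
      · rw [ha_def]; exact csInf_le hbdd hwS
      · exfalso
        rw [ha_def, Real.sInf_of_not_bddBelow hbdd] at ha
        exact lt_irrefl _ ha
    have hwhat : ∃ t : ℝ, 0 ≤ t ∧ ∃ v ∈ Xt, w = t • u + v := by
      refine ⟨s, hs0, s • (P u - u), ?_, ?_⟩
      · rw [← neg_sub u (P u)]
        exact Submodule.smul_mem _ _ (Submodule.neg_mem _ (hQm u))
      · rw [hw, smul_sub]; abel
    by_cases hwm : w = m u
    · rwa [hwm] at haw
    · exact le_of_lt (lt_of_le_of_lt haw (hm_max u hu w hwhat hwm))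
  -- consequence: `2 * a ≤ ‖P (m u)‖ ^ 2` and `I (m u) ≤ (1/2) * ‖P (m u)‖ ^ 2`
  have hkey : ∀ u ∉ Xt, I (m u) + a ≤ (1 / 2) * ‖P (m u)‖ ^ 2 := by
    intro u hu
    have := haJ u hu
    rw [hJI] at this
    linarith [hIpos (m u)]
  refine ⟨Real.sqrt (2 * a), Real.sqrt_pos.2 (by linarith), ?_, ?_⟩
  · intro u hu
    have h2a : 2 * a ≤ ‖P (m u)‖ ^ 2 := by
      have := hkey u hu
      linarith [hIpos (m u)]
    calc Real.sqrt (2 * a) ≤ Real.sqrt (‖P (m u)‖ ^ 2) := Real.sqrt_le_sqrt h2a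
      _ = ‖P (m u)‖ := by
          rw [Real.sqrt_sq (norm_nonneg _)]
  · -- boundedness on compact subsets of `X ∖ X̃`
    intro K hK hKXt
    by_contra hub
    rw [Metric.isBounded_iff_subset_closedBall 0] at hub
    push_neg at hub
    -- produce a sequence `u n ∈ K` with `n < ‖m (u n)‖`
    have hseq : ∀ n : ℕ, ∃ x ∈ K, (n : ℝ) < ‖m x‖ := by
      intro n
      obtain ⟨y, hy, hy2⟩ := Set.not_subset.1 (hub n)
      obtain ⟨x, hx, rfl⟩ := hy
      refine ⟨x, hx, ?_⟩
      by_contra h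
      push_neg at h
      exact hy2 (by simpa [Metric.mem_closedBall, dist_eq_norm] using h)
    choose u hu hnu using hseq
    obtain ⟨x, hxK, φ, hφ, hc⟩ := hK.tendsto_subseq hu
    set c : ℕ → X := u ∘ φ with hcdef
    have hcK : ∀ n, c n ∈ K := fun n => hu (φ n)
    have hcXt : ∀ n, c n ∉ Xt := fun n => hKXt _ (hcK n)
    have hxXt : x ∉ Xt := hKXt x hxK
    -- `‖m (c n)‖ → ∞`
    have hmTop : Tendsto (fun n => ‖m (c n)‖) atTop atTop := by
      apply tendsto_atTop_mono (fun n => ?_) tendsto_natCast_atTop_atTop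
      calc (n : ℝ) ≤ (φ n : ℝ) := by exact_mod_cast hφ.id_le n
        _ ≤ ‖m (c n)‖ := le_of_lt (hnu (φ n))
    -- `‖P (m (c n))‖ + I (m (c n)) → ∞` by (B1)
    have hPITop : Tendsto (fun n => ‖P (m (c n))‖ + I (m (c n))) atTop atTop := by
      rw [tendsto_atTop]
      intro M
      obtain ⟨R, hR⟩ := hB1 M
      filter_upwards [hmTop.eventually_ge_atTop R] with n hn
      exact hR _ hn
    -- hence `‖P (m (c n))‖ → ∞`
    have hPTop : Tendsto (fun n => ‖P (m (c n))‖) atTop atTop := by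
      rw [tendsto_atTop]
      intro M
      set M0 : ℝ := max M 0 with hM0
      filter_upwards [hPITop.eventually_ge_atTop (M0 + (1 / 2) * M0 ^ 2 + 1)] with n hn
      have h1 : I (m (c n)) ≤ (1 / 2) * ‖P (m (c n))‖ ^ 2 := by
        have := hkey (c n) (hcXt n); linarith
      have h2 : (0 : ℝ) ≤ ‖P (m (c n))‖ := norm_nonneg _
      by_contra h
      push_neg at h
      have h3 : ‖P (m (c n))‖ < M0 := lt_of_lt_of_le h (le_max_left _ _)
      have h4 : (0 : ℝ) ≤ M0 := le_max_right _ _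
      nlinarith
    -- convergence of `P (c n)` to `P x`
    have hPc : Tendsto (fun n => P (c n)) atTop (𝓝 (P x)) :=
      (P.continuous.tendsto x).comp hc
    have hPcn : Tendsto (fun n => ‖P (c n)‖) atTop (𝓝 ‖P x‖) := hPc.norm
    have hL : 0 < ‖P x‖ := norm_pos_iff.2 (hPne x hxXt)
    have hub2 : ∀ᶠ n in atTop, ‖P (c n)‖ < 2 * ‖P x‖ :=
      hPcn.eventually_lt_const (by linarith)
    -- extract `t n`, `v n` with `m (c n) = t n • c n + v n`
    choose! t ht0 v hv hm_eq using hm_mem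
    have hPmc : ∀ n, P (m (c n)) = t (c n) • P (c n) := by
      intro n
      rw [hm_eq (c n) (hcXt n), map_add, map_smul, hPt _ (hv (c n) (hcXt n)), add_zero]
    have hnPmc : ∀ n, ‖P (m (c n))‖ = t (c n) * ‖P (c n)‖ := by
      intro n
      rw [hPmc n, norm_smul, Real.norm_eq_abs, abs_of_nonneg (ht0 (c n) (hcXt n))]
    -- `t (c n) → ∞`
    have htTop : Tendsto (fun n => t (c n)) atTop atTop := by
      rw [tendsto_atTop]
      intro M
      filter_upwards [hPTop.eventually_ge_atTop (2 * ‖P x‖ * (|M| + 1)), hub2] with n h1 h2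
      have h3 := hnPmc n
      have h4 := ht0 (c n) (hcXt n)
      have h5 : (0 : ℝ) ≤ ‖P (c n)‖ := norm_nonneg _
      have h6 : M ≤ |M| := le_abs_self M
      nlinarith
    -- eventually `t (c n) > 0`
    have htpos : ∀ᶠ n in atTop, 0 < t (c n) := htTop.eventually_gt_atTop 0
    -- the auxiliary sequence `û n`
    set w : ℕ → X := fun n => c n + (t (c n))⁻¹ • v (c n) with hwdef
    have hPw : ∀ n, P (w n) = P (c n) := by
      intro n
      rw [hwdef]
      simp only [map_add, map_smul, hPt _ (hv (c n) (hcXt n)), smul_zero, add_zero]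
    have hPwt : Tendsto (fun n => P (w n)) atTop (𝓝 (P x)) := by
      simpa only [hPw] using hPc
    -- apply (B2)
    have hB2' := hB2 (fun n => t (c n)) w (P x) (hPm x) (hPne x hxXt) htTop hPwt
    -- eventually `t (c n) • w n = m (c n)`
    have hweq : ∀ᶠ n in atTop, t (c n) • w n = m (c n) := by
      filter_upwards [htpos] with n hn
      rw [hwdef]
      simp only [smul_add, smul_smul, mul_inv_cancel₀ (ne_of_gt hn), one_smul]
      exact (hm_eq (c n) (hcXt n)).symm
    have hImc : Tendsto (fun n => I (m (c n)) / (t (c n)) ^ 2) atTop atTop := by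
      refine hB2'.congr' ?_
      filter_upwards [hweq] with n hn
      rw [hn]
    -- but this ratio is eventually bounded by `2 * ‖P x‖ ^ 2`
    have hbound : ∀ᶠ n in atTop, I (m (c n)) / (t (c n)) ^ 2 ≤ 2 * ‖P x‖ ^ 2 := by
      filter_upwards [htpos, hub2] with n hn h2
      have h1 : I (m (c n)) ≤ (1 / 2) * ‖P (m (c n))‖ ^ 2 := by
        have := hkey (c n) (hcXt n); linarith
      rw [hnPmc n] at h1
      rw [div_le_iff₀ (by positivity)]
      have h5 : (0 : ℝ) ≤ ‖P (c n)‖ := norm_nonneg _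
      have h6 : ‖P (c n)‖ ^ 2 ≤ (2 * ‖P x‖) ^ 2 := by nlinarith
      have h7 : t (c n) ^ 2 * ‖P (c n)‖ ^ 2 ≤ t (c n) ^ 2 * (2 * ‖P x‖) ^ 2 :=
        mul_le_mul_of_nonneg_left h6 (sq_nonneg _)
      nlinarith
    obtain ⟨n, h1, h2⟩ := (hImc.eventually_gt_atTop (2 * ‖P x‖ ^ 2)).and hbound |>.exists
    exact absurd h1 (not_lt.2 h2)
end

section
/- Assume (A1), (A4), (B1) and (B2). Then J has the linking geometry: for every u⁺ ∈ X⁺∖{0} there exist R > r > 0 (with r as in (A4)) such that sup{J(u) : u ∈ ∂M(u⁺)} ≤ 0 = J(0) < inf{J(u) : u ∈ X⁺, ‖u‖ = r}, where ∂M(u⁺) := {u = t·u⁺ + ũ : ũ ∈ X̃, and either (‖u‖ = R and t ≥ 0) or (‖u‖ ≤ R and t = 0)}. -/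
open Filter Topology

/-- Under (A1), (A4), (B1), (B2), `J` has the linking geometry: for every
`u⁺ ∈ X⁺∖{0}` there is `R > r` such that `sup_{∂M(u⁺)} J ≤ 0 = J(0) < inf_{S⁺_r} J`. -/
theorem linking_geometry
    {X : Type*} [NormedAddCommGroup X] [NormedSpace ℝ X] [CompleteSpace X]
    -- X is reflexive
    (hrefl : Function.Surjective (NormedSpace.inclusionInDoubleDual ℝ X))
    -- topological direct sum decomposition X = X⁺ ⊕ X̃, with projection P onto X⁺ along X̃
    (Xp Xt : Submodule ℝ X)
    (hXpcl : IsClosed (Xp : Set X)) (hXtcl : IsClosed (Xt : Set X))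
    (P : X →L[ℝ] X)
    (hPm : ∀ x : X, P x ∈ Xp) (hQm : ∀ x : X, x - P x ∈ Xt)
    (hPp : ∀ x ∈ Xp, P x = x) (hPt : ∀ x ∈ Xt, P x = 0)
    -- ‖u‖² = ‖u⁺‖² + ‖ũ‖²
    (hnorm : ∀ x : X, ‖x‖ ^ 2 = ‖P x‖ ^ 2 + ‖x - P x‖ ^ 2)
    -- J, I of class C¹ with J(u) = ½‖u⁺‖² - I(u)
    (J I : X → ℝ) (J' I' : X → X →L[ℝ] ℝ)
    (hJd : ∀ x, HasFDerivAt J (J' x) x) (hJ'c : Continuous J')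
    (hId : ∀ x, HasFDerivAt I (I' x) x) (hI'c : Continuous I')
    (hJI : ∀ x : X, J x = (1 / 2) * ‖P x‖ ^ 2 - I x)
    -- (A1)
    (hI0 : I 0 = 0) (hIpos : ∀ x : X, 0 ≤ I x)
    -- (A4)
    (r a : ℝ) (hr : 0 < r)
    (ha_def : a = sInf (J '' {x : X | x ∈ Xp ∧ ‖x‖ = r})) (ha : 0 < a)
    -- (B1) : ‖u⁺‖ + I(u) → ∞ as ‖u‖ → ∞
    (hB1 : ∀ M : ℝ, ∃ R : ℝ, ∀ u : X, R ≤ ‖u‖ → M ≤ ‖P u‖ + I u)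
    -- (B2)
    (hB2 : ∀ (t : ℕ → ℝ) (u : ℕ → X) (w : X), w ∈ Xp → w ≠ 0 →
      Tendsto t atTop atTop → Tendsto (fun n => P (u n)) atTop (𝓝 w) →
      Tendsto (fun n => I (t n • u n) / (t n) ^ 2) atTop atTop)
    :
    ∀ up : X, up ∈ Xp → up ≠ 0 →
      ∃ R : ℝ, r < R ∧
        (∀ (t : ℝ), ∀ v ∈ Xt,
          ((‖t • up + v‖ = R ∧ 0 ≤ t) ∨ (‖t • up + v‖ ≤ R ∧ t = 0)) →
          J (t • up + v) ≤ 0) ∧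
        J 0 = 0 ∧
        0 < sInf (J '' {x : X | x ∈ Xp ∧ ‖x‖ = r}) := by

  intro up hup hup0
  have hupn : (0:ℝ) < ‖up‖ := norm_pos_iff.2 hup0
  have hJ0 : J 0 = 0 := by
    rw [hJI, map_zero, hI0]; simp
  have hinf : 0 < sInf (J '' {x : X | x ∈ Xp ∧ ‖x‖ = r}) := ha_def ▸ ha
  have Pu : ∀ (s : ℝ) (v : X), v ∈ Xt → P (s • up + v) = s • up := by
    intro s v hv
    rw [map_add, map_smul, hPp up hup, hPt v hv, add_zero]
  suffices hmain : ∃ R : ℝ, r < R ∧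
      (∀ (t : ℝ), ∀ v ∈ Xt,
        ((‖t • up + v‖ = R ∧ 0 ≤ t) ∨ (‖t • up + v‖ ≤ R ∧ t = 0)) →
        J (t • up + v) ≤ 0) by
    obtain ⟨R, h1, h2⟩ := hmain
    exact ⟨R, h1, h2, hJ0, hinf⟩
  by_contra hcon
  push_neg at hcon
  have hsel : ∀ n : ℕ, ∃ tt : ℝ, ∃ vv : X, vv ∈ Xt ∧
      ((‖tt • up + vv‖ = r + n + 1 ∧ 0 ≤ tt) ∨ (‖tt • up + vv‖ ≤ r + n + 1 ∧ tt = 0)) ∧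
      0 < J (tt • up + vv) := by
    intro n
    have hrn : r < r + n + 1 := by
      have : (0:ℝ) ≤ (n:ℝ) := Nat.cast_nonneg n
      linarith
    exact hcon (r + n + 1) hrn
  choose t v hvmem hcnd hJpos using hsel
  -- rule out the t = 0 case
  have key : ∀ n, 0 ≤ t n ∧ ‖t n • up + v n‖ = r + n + 1 := by
    intro n
    rcases hcnd n with ⟨h1, h2⟩ | ⟨h1, h2⟩
    · exact ⟨h2, h1⟩
    · exfalso
      have hJn := hJpos n
      rw [h2, zero_smul, zero_add, hJI, hPt _ (hvmem n)] at hJn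
      have := hIpos (v n)
      simp at hJn
      linarith
  have hne : ∀ n, ‖t n • up + v n‖ = r + n + 1 := fun n => (key n).2
  -- J(u n) > 0 gives I(u n) < 1/2 t^2 ‖up‖^2
  have hIlt : ∀ n, I (t n • up + v n) < 1/2 * (t n)^2 * ‖up‖^2 := by
    intro n
    have hJn := hJpos n
    rw [hJI, Pu (t n) (v n) (hvmem n), norm_smul, mul_pow, Real.norm_eq_abs, sq_abs] at hJn
    linarith
  have htpos : ∀ n, 0 < t n := by
    intro n
    rcases lt_or_eq_of_le (key n).1 with h | h
    · exact h
    · exfalso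
      have := hIlt n
      have h2 := hIpos (v n)
      rw [← h] at this
      simp at this
      linarith
  -- B1 consequence
  have hRn : Tendsto (fun n : ℕ => r + (n:ℝ) + 1) atTop atTop := by
    apply tendsto_atTop_add_const_right
    apply tendsto_atTop_add_const_left
    exact tendsto_natCast_atTop_atTop
  have hT1 : Tendsto (fun n => t n * ‖up‖ + I (t n • up + v n)) atTop atTop := by
    rw [tendsto_atTop]
    intro M
    obtain ⟨R, hR⟩ := hB1 M
    filter_upwards [hRn.eventually_ge_atTop R] with n hn
    have h2 := hR (t n • up + v n) (by rw [hne n]; exact hn)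
    rwa [Pu (t n) (v n) (hvmem n), norm_smul, Real.norm_eq_abs,
      abs_of_nonneg (key n).1] at h2
  have hT2 : Tendsto (fun n => t n * ‖up‖ + 1/2 * (t n)^2 * ‖up‖^2) atTop atTop := by
    apply tendsto_atTop_mono _ hT1
    intro n
    have := hIlt n
    linarith
  have htinf : Tendsto t atTop atTop := by
    rw [tendsto_atTop]
    intro C
    set C' := max C 0 with hC'
    have h0 : 0 ≤ C' := le_max_right _ _
    filter_upwards [hT2.eventually_ge_atTop (C' * ‖up‖ + 1/2 * C'^2 * ‖up‖^2 + 1)] with n hn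
    have hC'le : C' ≤ t n := by
      by_contra hlt
      push_neg at hlt
      have h1 : t n * ‖up‖ ≤ C' * ‖up‖ := by nlinarith
      have h2 : (t n)^2 ≤ C'^2 := by nlinarith [(key n).1]
      have h3 : (t n)^2 * ‖up‖^2 ≤ C'^2 * ‖up‖^2 := by nlinarith [sq_nonneg (‖up‖)]
      linarith
    exact le_trans (le_max_left C 0) hC'le
  -- B2 application
  have hPconv : Tendsto (fun n => P (up + (t n)⁻¹ • v n)) atTop (𝓝 up) := by
    have heq : (fun n => P (up + (t n)⁻¹ • v n)) = fun _ => up := by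
      funext n
      rw [map_add, map_smul, hPp up hup, hPt _ (hvmem n), smul_zero, add_zero]
    rw [heq]
    exact tendsto_const_nhds
  have hB2' := hB2 t (fun n => up + (t n)⁻¹ • v n) up hup hup0 htinf hPconv
  have heq2 : ∀ n, t n • (up + (t n)⁻¹ • v n) = t n • up + v n := by
    intro n
    rw [smul_add, smul_inv_smul₀ (ne_of_gt (htpos n))]
  simp only [heq2] at hB2'
  obtain ⟨n, hn⟩ := (hB2'.eventually_ge_atTop (1/2 * ‖up‖^2)).exists
  have hlt := hIlt n
  have ht2 : (0:ℝ) < (t n)^2 := pow_pos (htpos n) 2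
  rw [le_div_iff₀ ht2] at hn
  nlinarith
end

section
/- Under assumptions (A1)–(A6), let c > 0 and let (vₙ) ⊂ N be a sequence with J(vₙ) → c and ‖J'(vₙ)‖_{X*} → 0 which T-converges to some v ∈ X. Then v⁺ ≠ 0, v ∈ N, vₙ → v in the norm of X, and J(v) = c. -/
open Filter Topology

/-- Under (A1)–(A6), if `(vₙ) ⊂ N` is a `(PS)_c`-sequence with `c > 0`
which T-converges to `v`, then `v⁺ ≠ 0`, `v ∈ N`, `vₙ → v` in norm and `J(v) = c`. -/
theorem PS_sequence_limit
    {X : Type*} [NormedAddCommGroup X] [NormedSpace ℝ X] [CompleteSpace X]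
    -- X is reflexive
    (hrefl : Function.Surjective (NormedSpace.inclusionInDoubleDual ℝ X))
    -- topological direct sum decomposition X = X⁺ ⊕ X̃, with projection P onto X⁺ along X̃
    (Xp Xt : Submodule ℝ X)
    (hXpcl : IsClosed (Xp : Set X)) (hXtcl : IsClosed (Xt : Set X))
    (P : X →L[ℝ] X)
    (hPm : ∀ x : X, P x ∈ Xp) (hQm : ∀ x : X, x - P x ∈ Xt)
    (hPp : ∀ x ∈ Xp, P x = x) (hPt : ∀ x ∈ Xt, P x = 0)
    -- ‖u‖² = ‖u⁺‖² + ‖ũ‖²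
    (hnorm : ∀ x : X, ‖x‖ ^ 2 = ‖P x‖ ^ 2 + ‖x - P x‖ ^ 2)
    -- u ↦ ‖u‖² is C¹ on X⁺
    (hC1 : ContDiffOn ℝ 1 (fun x : X => ‖x‖ ^ 2) (Xp : Set X))
    -- J, I of class C¹ with J(u) = ½‖u⁺‖² - I(u)
    (J I : X → ℝ) (J' I' : X → X →L[ℝ] ℝ)
    (hJd : ∀ x, HasFDerivAt J (J' x) x) (hJ'c : Continuous J')
    (hId : ∀ x, HasFDerivAt I (I' x) x) (hI'c : Continuous I')
    (hJI : ∀ x : X, J x = (1 / 2) * ‖P x‖ ^ 2 - I x)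
    -- (A1)
    (hI0 : I 0 = 0) (hIpos : ∀ x : X, 0 ≤ I x)
    -- (A2) : T-convergence implies liminf I(uₙ) ≥ I(v)
    (hA2 : ∀ (u : ℕ → X) (v : X),
      Tendsto (fun n => P (u n)) atTop (𝓝 (P v)) →
      (∀ φ : X →L[ℝ] ℝ, Tendsto (fun n => φ (u n - P (u n))) atTop (𝓝 (φ (v - P v)))) →
      ∀ b : ℝ, b < I v → ∀ᶠ n in atTop, b < I (u n))
    -- (A3)
    (hA3 : ∀ (u : ℕ → X) (v : X),
      Tendsto (fun n => P (u n)) atTop (𝓝 (P v)) →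
      (∀ φ : X →L[ℝ] ℝ, Tendsto (fun n => φ (u n - P (u n))) atTop (𝓝 (φ (v - P v)))) →
      Tendsto (fun n => I (u n)) atTop (𝓝 (I v)) →
      Tendsto u atTop (𝓝 v))
    -- (A4)
    (r a : ℝ) (hr : 0 < r)
    (ha_def : a = sInf (J '' {x : X | x ∈ Xp ∧ ‖x‖ = r})) (ha : 0 < a)
    -- (A5) : m̂(u) is the unique nontrivial critical point of J|_{X(u)} in X̂(u), and the
    -- unique global maximum of J on X̂(u)
    (m : X → X)
    (hm_mem : ∀ u ∉ Xt, ∃ t : ℝ, 0 ≤ t ∧ ∃ v ∈ Xt, m u = t • u + v)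
    (hm_ne : ∀ u ∉ Xt, m u ≠ 0)
    (hm_crit : ∀ u ∉ Xt, ∀ z : X, (∃ t : ℝ, ∃ v ∈ Xt, z = t • u + v) → J' (m u) z = 0)
    (hm_unique : ∀ u ∉ Xt, ∀ w : X, (∃ t : ℝ, 0 ≤ t ∧ ∃ v ∈ Xt, w = t • u + v) → w ≠ 0 →
      (∀ z : X, (∃ t : ℝ, ∃ v ∈ Xt, z = t • u + v) → J' w z = 0) → w = m u)
    (hm_max : ∀ u ∉ Xt, ∀ w : X, (∃ t : ℝ, 0 ≤ t ∧ ∃ v ∈ Xt, w = t • u + v) →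
      w ≠ m u → J w < J (m u))
    -- (A6)
    (δ : ℝ) (hδ : 0 < δ) (hm_lb : ∀ u ∉ Xt, δ ≤ ‖P (m u)‖)
    (hm_bdd : ∀ K : Set X, IsCompact K → (∀ x ∈ K, x ∉ Xt) →
      Bornology.IsBounded (m '' K))
    -- a (PS)_c-sequence in N, c > 0, which T-converges to v
    (c : ℝ) (hc : 0 < c) (v : ℕ → X) (w : X)
    (hvN : ∀ n, (v n) ∈ {u : X | u ∉ Xt ∧ J' u u = 0 ∧ ∀ v ∈ Xt, J' u v = 0})
    (hvJ : Tendsto (fun n => J (v n)) atTop (𝓝 c))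
    (hvJ' : Tendsto (fun n => ‖J' (v n)‖) atTop (𝓝 0))
    (hvT1 : Tendsto (fun n => P (v n)) atTop (𝓝 (P w)))
    (hvT2 : ∀ ψ : X →L[ℝ] ℝ,
      Tendsto (fun n => ψ (v n - P (v n))) atTop (𝓝 (ψ (w - P w)))) :
    P w ≠ 0 ∧
    w ∈ {u : X | u ∉ Xt ∧ J' u u = 0 ∧ ∀ v ∈ Xt, J' u v = 0} ∧
    Tendsto v atTop (𝓝 w) ∧
    J w = c := by
  -- P kills Xt
  have hJcont : Continuous J := continuous_iff_continuousAt.2 fun x => (hJd x).continuousAt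
  -- each vₙ equals m (vₙ)
  have hmv : ∀ n, m (v n) = v n := by
    intro n
    obtain ⟨hnt, hcrit1, hcrit2⟩ := hvN n
    refine (hm_unique (v n) hnt (v n) ⟨1, zero_le_one, 0, Xt.zero_mem, by simp⟩
      (fun h => hnt (h ▸ Xt.zero_mem)) ?_).symm
    rintro z ⟨t, y, hy, rfl⟩
    rw [map_add, map_smul]
    rw [hcrit1, hcrit2 y hy]
    simp
  -- δ ≤ ‖P w‖
  have hPvn : ∀ n, δ ≤ ‖P (v n)‖ := by
    intro n
    have := hm_lb (v n) (hvN n).1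
    rwa [hmv n] at this
  have hPnorm : Tendsto (fun n => ‖P (v n)‖) atTop (𝓝 ‖P w‖) := hvT1.norm
  have hδw : δ ≤ ‖P w‖ := ge_of_tendsto' hPnorm hPvn
  have hPw : P w ≠ 0 := by
    intro h
    rw [h, norm_zero] at hδw
    linarith
  have hwN : w ∉ Xt := fun h => hPw (hPt w h)
  -- J w ≤ c via the sequence uₙ = P vₙ + (w - P w)
  have hJwc : J w ≤ c := by
    set u : ℕ → X := fun n => P (v n) + (w - P w) with hu
    have huw : Tendsto u atTop (𝓝 w) := by
      have : Tendsto u atTop (𝓝 (P w + (w - P w))) := hvT1.add tendsto_const_nhds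
      simpa using this
    have hle : ∀ n, J (u n) ≤ J (v n) := by
      intro n
      have hnt := (hvN n).1
      have hmem : ∃ t : ℝ, 0 ≤ t ∧ ∃ z ∈ Xt, u n = t • (v n) + z := by
        refine ⟨1, zero_le_one, (w - P w) - (v n - P (v n)),
          Xt.sub_mem (hQm w) (hQm (v n)), ?_⟩
        simp [hu]
        abel
      by_cases h : u n = m (v n)
      · rw [h, hmv n]
      · exact le_of_lt (by rw [← hmv n]; exact hm_max (v n) hnt (u n) hmem h)
    have hJu : Tendsto (fun n => J (u n)) atTop (𝓝 (J w)) :=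
      (hJcont.tendsto w).comp huw
    exact le_of_tendsto_of_tendsto' hJu hvJ hle
  -- I (vₙ) → L := ½‖Pw‖² - c
  have hItend : Tendsto (fun n => I (v n)) atTop (𝓝 ((1 / 2) * ‖P w‖ ^ 2 - c)) := by
    have h1 : Tendsto (fun n => (1 / 2 : ℝ) * ‖P (v n)‖ ^ 2 - J (v n)) atTop
        (𝓝 ((1 / 2) * ‖P w‖ ^ 2 - c)) :=
      (tendsto_const_nhds.mul (hPnorm.pow 2)).sub hvJ
    refine h1.congr fun n => ?_
    have := hJI (v n)
    linarith
  -- I w ≤ L by (A2)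
  have hIwL : I w ≤ (1 / 2) * ‖P w‖ ^ 2 - c := by
    by_contra h
    push_neg at h
    have hb : ((1 / 2) * ‖P w‖ ^ 2 - c + I w) / 2 < I w := by linarith
    have h1 := hA2 v w hvT1 hvT2 _ hb
    have h2 : ∀ᶠ n in atTop, I (v n) < ((1 / 2) * ‖P w‖ ^ 2 - c + I w) / 2 :=
      hItend.eventually_lt_const (by linarith)
    obtain ⟨n, hn1, hn2⟩ := (h1.and h2).exists
    linarith
  -- I w ≥ L from J w ≤ c
  have hIwL' : (1 / 2) * ‖P w‖ ^ 2 - c ≤ I w := by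
    have := hJI w
    linarith
  have hIw : I w = (1 / 2) * ‖P w‖ ^ 2 - c := le_antisymm hIwL hIwL'
  -- norm convergence
  have hconv : Tendsto v atTop (𝓝 w) := hA3 v w hvT1 hvT2 (hIw ▸ hItend)
  -- J' w = 0
  have hJ'w : J' w = 0 := by
    have h1 : Tendsto (fun n => ‖J' (v n)‖) atTop (𝓝 ‖J' w‖) :=
      ((hJ'c.tendsto w).comp hconv).norm
    have := tendsto_nhds_unique h1 hvJ'
    exact norm_eq_zero.mp this
  refine ⟨hPw, ⟨hwN, by rw [hJ'w]; rfl, fun z _ => by rw [hJ'w]; rfl⟩, hconv, ?_⟩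
  exact tendsto_nhds_unique ((hJcont.tendsto w).comp hconv) hvJ
end
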